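/- Let p, q be positive real numbers with p ≤ q such that S([p,q]) is a non proper numerical semigroup. Then there exists a unique maximal open interval ]p̂,q̂[ (with respect to inclusion, possibly with q̂ = ∞) such that [p,q] ⊆ ]p̂,q̂[ and S(]p̂,q̂[) = S([p,q]); that is, there is an open interval ]p̂,q̂[ containing [p,q] with S(]p̂,q̂[) = S([p,q]) which contains every open interval J with [p,q] ⊆ J and S(J) = S([p,q]). -/

import Mathlib

/-- The numerical semigroup `𝒮(I) = ⋃_{k∈ℕ} k·I ∩ ℕ` generated by a real interval `I`. -/
def NSet (I : Set ℝ) : Set ℕ := {m | ∃ k : ℕ, ∃ r ∈ I, (m : ℝ) = (k : ℝ) * r}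

/-- An open interval of `ℝ`, possibly unbounded above (`q̂ = ∞`). -/
def IsOpenInterval (J : Set ℝ) : Prop := (∃ a c : ℝ, J = Set.Ioo a c) ∨ (∃ a : ℝ, J = Set.Ioi a)

/-!
Call an open interval `J ⊇ [p,q]` admissible if `𝒮(J) = 𝒮([p,q])`; the maximal interval is the
union of all admissible ones. That union is open and, as a union of intervals through `p`,
preconnected; it stays inside `]0,∞[` because `𝒮(]0,p]) = ℕ` while `𝒮([p,q]) ≠ ℕ`, so it is an
open interval, and it is admissible since every `m ∈ 𝒮(J)` is already produced by one admissible `J`.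
Admissible intervals exist because there are only finitely many gaps `m`, and for each of them
only the finitely many ratios `m / k > p / 2` can come close to `[p,q]`, none lying in it.
-/

open Set Filter Topology

lemma NSet_mono : Monotone NSet := by
  rintro I J h m ⟨k, r, hr, hm⟩
  exact ⟨k, r, h hr, hm⟩

lemma zero_mem_NSet {I : Set ℝ} (h : I.Nonempty) : 0 ∈ NSet I := by
  obtain ⟨r, hr⟩ := h
  exact ⟨0, r, hr, by simp⟩

lemma mem_NSet_iff_of_ne_zero {I : Set ℝ} {m : ℕ} (hm : m ≠ 0) :
    m ∈ NSet I ↔ ∃ k : ℕ, 0 < k ∧ (m : ℝ) / k ∈ I := by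
  constructor
  · rintro ⟨k, r, hr, hmk⟩
    have hk : k ≠ 0 := by rintro rfl; simp_all
    refine ⟨k, Nat.pos_of_ne_zero hk, ?_⟩
    rwa [hmk, mul_div_cancel_left₀ _ (Nat.cast_ne_zero.2 hk)]
  · rintro ⟨k, hk, hmk⟩
    refine ⟨k, m / k, hmk, ?_⟩
    rw [mul_div_cancel₀ _ (by positivity)]

lemma NSet_Ioc_zero {p : ℝ} (hp : 0 < p) : NSet (Ioc 0 p) = univ := by
  refine eq_univ_of_forall fun m => ?_
  rcases Nat.eq_zero_or_pos m with rfl | hm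
  · exact zero_mem_NSet ⟨p, hp, le_rfl⟩
  have hmp : 0 < (m : ℝ) / p := by positivity
  have hk : 0 < ⌈(m : ℝ) / p⌉₊ := Nat.ceil_pos.2 hmp
  refine (mem_NSet_iff_of_ne_zero hm.ne').2 ⟨_, hk, by positivity, ?_⟩
  rw [div_le_iff₀ (by positivity), ← div_le_iff₀' hp]
  exact Nat.le_ceil _

lemma subset_Ioi_zero_of_NSet_ne_univ {J : Set ℝ} {p : ℝ} (hJ : J.OrdConnected) (hpJ : p ∈ J)
    (hp : 0 < p) (h : NSet J ≠ univ) : J ⊆ Ioi 0 := by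
  intro x hx
  by_contra hx0
  rw [mem_Ioi, not_lt] at hx0
  refine h (eq_univ_of_univ_subset ((NSet_Ioc_zero hp).symm.subset.trans (NSet_mono ?_)))
  exact fun t ht => hJ.out hx hpJ ⟨by linarith [ht.1], ht.2⟩

lemma IsOpenInterval.isOpen {J : Set ℝ} (hJ : IsOpenInterval J) : IsOpen J := by
  rcases hJ with ⟨a, c, rfl⟩ | ⟨a, rfl⟩
  exacts [isOpen_Ioo, isOpen_Ioi]

lemma IsOpenInterval.ordConnected {J : Set ℝ} (hJ : IsOpenInterval J) : J.OrdConnected := by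
  rcases hJ with ⟨a, c, rfl⟩ | ⟨a, rfl⟩
  exacts [ordConnected_Ioo, ordConnected_Ioi]

lemma isOpenInterval_of_isOpen_of_isPreconnected {J : Set ℝ} (hJo : IsOpen J)
    (hJc : IsPreconnected J) (hne : J.Nonempty) (hbdd : BddBelow J) : IsOpenInterval J := by
  have between : ∀ x ∈ J, ∃ y ∈ J, ∃ z ∈ J, y < x ∧ x < z := by
    intro x hx
    obtain ⟨ε, hε, hball⟩ := Metric.isOpen_iff.1 hJo x hx
    rw [Real.ball_eq_Ioo] at hball
    exact ⟨x - ε / 2, hball ⟨by linarith, by linarith⟩, x + ε / 2,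
      hball ⟨by linarith, by linarith⟩, by linarith, by linarith⟩
  by_cases hab : BddAbove J
  · refine .inl ⟨sInf J, sSup J, subset_antisymm (fun x hx => ?_)
      (IsConnected.Ioo_csInf_csSup_subset ⟨hne, hJc⟩ hbdd hab)⟩
    obtain ⟨y, hy, z, hz, hyx, hxz⟩ := between x hx
    exact ⟨(csInf_le hbdd hy).trans_lt hyx, hxz.trans_le (le_csSup hab hz)⟩
  · refine .inr ⟨sInf J, subset_antisymm (fun x hx => ?_) (hJc.Ioi_csInf_subset hbdd hab)⟩
    obtain ⟨y, hy, -, -, hyx, -⟩ := between x hx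
    exact (csInf_le hbdd hy).trans_lt hyx

lemma eventually_notMem_Ioo_sub_add {p q x : ℝ} (hx : x ∉ Icc p q) :
    ∀ᶠ δ in 𝓝 (0 : ℝ), x ∉ Ioo (p - δ) (q + δ) := by
  rcases not_and_or.1 hx with hxp | hqx
  · filter_upwards [eventually_lt_nhds (sub_pos.2 (not_le.1 hxp))] with δ hδ hmem
    linarith [hmem.1]
  · filter_upwards [eventually_lt_nhds (sub_pos.2 (not_le.1 hqx))] with δ hδ hmem
    linarith [hmem.2]

lemma eventually_notMem_NSet_Ioo {p q : ℝ} (hp : 0 < p) (hpq : p ≤ q) {m : ℕ}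
    (hm : m ∉ NSet (Icc p q)) : ∀ᶠ δ in 𝓝 (0 : ℝ), m ∉ NSet (Ioo (p - δ) (q + δ)) := by
  have hm0 : m ≠ 0 := by rintro rfl; exact hm (zero_mem_NSet ⟨p, left_mem_Icc.2 hpq⟩)
  -- only the ratios `m / k` with `k ≤ N` can exceed `p / 2`
  set N := ⌈2 * (m : ℝ) / p⌉₊
  have hratios : ∀ k ∈ Iic N, (m : ℝ) / k ∉ Icc p q := by
    intro k _ hk
    rcases Nat.eq_zero_or_pos k with rfl | hk0
    · simp only [CharP.cast_eq_zero, div_zero, mem_Icc] at hk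
      linarith [hk.1]
    · exact hm ((mem_NSet_iff_of_ne_zero hm0).2 ⟨k, hk0, hk⟩)
  filter_upwards [eventually_lt_nhds (half_pos hp),
    (finite_Iic N).eventually_all.2 fun k hk => eventually_notMem_Ioo_sub_add (hratios k hk)]
    with δ hδ hfar hmem
  obtain ⟨k, hk0, hk⟩ := (mem_NSet_iff_of_ne_zero hm0).1 hmem
  refine hfar k ?_ hk
  have hkm : p / 2 < (m : ℝ) / k := by linarith [hk.1]
  rw [lt_div_iff₀ (by positivity)] at hkm
  have hkN : (k : ℝ) ≤ N :=
    le_trans (by rw [le_div_iff₀ hp]; linarith) (Nat.le_ceil (2 * (m : ℝ) / p))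
  exact_mod_cast hkN

lemma exists_NSet_Ioo_eq {p q : ℝ} (hp : 0 < p) (hpq : p ≤ q)
    (hfin : ((NSet (Icc p q))ᶜ).Finite) :
    ∃ δ > 0, NSet (Ioo (p - δ) (q + δ)) = NSet (Icc p q) := by
  have hgaps : ∀ᶠ δ in 𝓝[>] (0 : ℝ), ∀ m ∈ (NSet (Icc p q))ᶜ, m ∉ NSet (Ioo (p - δ) (q + δ)) :=
    hfin.eventually_all.2 fun m hm => nhdsWithin_le_nhds (eventually_notMem_NSet_Ioo hp hpq hm)
  obtain ⟨δ, hδ, hδ0⟩ := (hgaps.and self_mem_nhdsWithin).exists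
  refine ⟨δ, hδ0, ?_⟩
  refine subset_antisymm (fun m hm => of_not_not fun h => hδ m h hm) (NSet_mono ?_)
  exact Icc_subset_Ioo (by linarith) (by linarith)

/-- **Lemma.** For `0 < p ≤ q` with `𝒮([p,q])` a non proper numerical semigroup, there is a
unique maximal open interval `]p̂,q̂[` (possibly with `q̂ = ∞`) containing `[p,q]` with
`𝒮(]p̂,q̂[) = 𝒮([p,q])`: it contains every open interval `J ⊇ [p,q]` with `𝒮(J) = 𝒮([p,q])`. -/
theorem stmt9 (p q : ℝ) (hp : 0 < p) (hpq : p ≤ q)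
    (hfin : ((NSet (Set.Icc p q))ᶜ).Finite)
    (hproper : NSet (Set.Icc p q) ≠ Set.univ) :
    ∃ J : Set ℝ, IsOpenInterval J ∧ Set.Icc p q ⊆ J ∧ NSet J = NSet (Set.Icc p q) ∧
      ∀ J' : Set ℝ, IsOpenInterval J' → Set.Icc p q ⊆ J' →
        NSet J' = NSet (Set.Icc p q) → J' ⊆ J := by
  set 𝒥 := {J' : Set ℝ | IsOpenInterval J' ∧ Icc p q ⊆ J' ∧ NSet J' = NSet (Icc p q)}
  obtain ⟨δ, hδ, hδS⟩ := exists_NSet_Ioo_eq hp hpq hfin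
  have hJ₀ : Ioo (p - δ) (q + δ) ∈ 𝒥 :=
    ⟨.inl ⟨_, _, rfl⟩, Icc_subset_Ioo (by linarith) (by linarith), hδS⟩
  have hp𝒥 : ∀ J' ∈ 𝒥, p ∈ J' := fun J' hJ' => hJ'.2.1 (left_mem_Icc.2 hpq)
  have hpos : ⋃₀ 𝒥 ⊆ Ioi 0 := sUnion_subset fun J' hJ' =>
    subset_Ioi_zero_of_NSet_ne_univ hJ'.1.ordConnected (hp𝒥 J' hJ') hp (hJ'.2.2 ▸ hproper)
  have hinterval : IsOpenInterval (⋃₀ 𝒥) :=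
    isOpenInterval_of_isOpen_of_isPreconnected (isOpen_sUnion fun J' hJ' => hJ'.1.isOpen)
      (isPreconnected_sUnion p 𝒥 hp𝒥 fun J' hJ' => hJ'.1.ordConnected.isPreconnected)
      ⟨p, subset_sUnion_of_mem hJ₀ (hp𝒥 _ hJ₀)⟩ ⟨0, fun x hx => le_of_lt (hpos hx)⟩
  have hNSet : NSet (⋃₀ 𝒥) = NSet (Icc p q) := by
    refine subset_antisymm ?_ (hδS ▸ NSet_mono (subset_sUnion_of_mem hJ₀))
    rintro m ⟨k, r, ⟨J', hJ', hr⟩, hm⟩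
    exact hJ'.2.2 ▸ ⟨k, r, hr, hm⟩
  exact ⟨⋃₀ 𝒥, hinterval, hJ₀.2.1.trans (subset_sUnion_of_mem hJ₀), hNSet,
    fun J' h₁ h₂ h₃ => subset_sUnion_of_mem ⟨h₁, h₂, h₃⟩⟩
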